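/- arXiv:2305.03964 — 3 statements merged into one kernel-verified Lean document; each statement's English description precedes it below -/
import Mathlib

section
/- Let E_1, E_2 be faces of a nice manifold with corners Q with E_1 ∩ E_2 = G_1 ⊔ ⋯ ⊔ G_h a disjoint union of faces. If α is an E_1-face element and β is an E_2-face element, then αβ = Σ_{i=1}^h Θ_{E_1 G_i}(α) · Θ_{E_2 G_i}(β), where Θ_{EG}(α)_F = φ_{GF}(φ_{EG}(α_E)). In particular the k-submodule of A spanned by all face elements is closed under multiplication, i.e. the topological face ring k[Q] is a subring of A. -/
/-- If `E₁ ∩ E₂ = G₁ ⊔ ⋯ ⊔ G_h` (each face below both `E₁`, `E₂` lies below exactly one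
`G i`), then for an `E₁`-face element `α` and an `E₂`-face element `β`,
`αβ = Σᵢ Θ_{E₁Gᵢ}(α) · Θ_{E₂Gᵢ}(β)` componentwise; in particular the product lies in the
`𝕜`-span of face elements, so the topological face ring `𝕜[Q]` is a subring. -/
theorem stmt_7 {ι : Type*} [PartialOrder ι] (𝕜 : Type*) [CommRing 𝕜]
    (A : ι → Type*) [∀ i, CommRing (A i)] [∀ i, Algebra 𝕜 (A i)]
    (φ : ∀ E F : ι, A E →ₙ+* A F)
    (hzero : ∀ E F : ι, ¬ F ≤ E → φ E F = 0)
    (hcomp : ∀ E G F : ι, F ≤ G → G ≤ E → (φ G F).comp (φ E G) = φ E F)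
    (hsmul : ∀ (E F : ι) (c : 𝕜) (x : A E), φ E F (c • x) = c • φ E F x)
    (E₁ E₂ : ι) (h : ℕ) (G : Fin h → ι)
    (hG : ∀ i, G i ≤ E₁ ∧ G i ≤ E₂)
    (hcover : ∀ F : ι, F ≤ E₁ → F ≤ E₂ → ∃! i, F ≤ G i)
    (α β : ∀ F, A F)
    (hα : ∀ F, α F = φ E₁ F (α E₁)) (hβ : ∀ F, β F = φ E₂ F (β E₂)) :
    (∀ F, α F * β F =
        ∑ i : Fin h, φ (G i) F (φ E₁ (G i) (α E₁)) * φ (G i) F (φ E₂ (G i) (β E₂))) ∧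
    (fun F => α F * β F) ∈
      Submodule.span 𝕜 {γ : ∀ F, A F | ∃ E, ∀ F, γ F = φ E F (γ E)} := by
  have key : ∀ F, α F * β F =
      ∑ i : Fin h, φ (G i) F (φ E₁ (G i) (α E₁)) * φ (G i) F (φ E₂ (G i) (β E₂)) := by
    intro F
    rw [hα F, hβ F]
    by_cases h1 : F ≤ E₁
    · by_cases h2 : F ≤ E₂
      · obtain ⟨i, hi, huniq⟩ := hcover F h1 h2
        rw [Finset.sum_eq_single i]
        · have e1 : φ (G i) F (φ E₁ (G i) (α E₁)) = φ E₁ F (α E₁) := by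
            rw [← hcomp E₁ (G i) F hi (hG i).1]; rfl
          have e2 : φ (G i) F (φ E₂ (G i) (β E₂)) = φ E₂ F (β E₂) := by
            rw [← hcomp E₂ (G i) F hi (hG i).2]; rfl
          rw [e1, e2]
        · intro j _ hj
          have : ¬ F ≤ G j := fun hle => hj (huniq j hle)
          rw [hzero (G j) F this]
          simp
        · intro hmem; exact absurd (Finset.mem_univ i) hmem
      · rw [hzero E₂ F h2]
        have : ∀ i : Fin h, ¬ F ≤ G i := fun i hle => h2 (hle.trans (hG i).2)
        simp only [NonUnitalRingHom.zero_apply, mul_zero]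
        rw [Finset.sum_eq_zero]
        intro i _
        rw [hzero (G i) F (this i)]
        simp
    · rw [hzero E₁ F h1]
      have : ∀ i : Fin h, ¬ F ≤ G i := fun i hle => h1 (hle.trans (hG i).1)
      simp only [NonUnitalRingHom.zero_apply, zero_mul]
      rw [Finset.sum_eq_zero]
      intro i _
      rw [hzero (G i) F (this i)]
      simp
  refine ⟨key, ?_⟩
  have : (fun F => α F * β F) =
      ∑ i : Fin h, (fun F => φ (G i) F (φ E₁ (G i) (α E₁) * φ E₂ (G i) (β E₂))) := by
    funext F
    rw [key F]
    simp only [Finset.sum_apply]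
    exact Finset.sum_congr rfl fun i _ => (map_mul _ _ _).symm
  rw [this]
  apply Submodule.sum_mem
  intro i _
  apply Submodule.subset_span
  refine ⟨G i, fun F => ?_⟩
  show φ (G i) F _ = φ (G i) F (φ (G i) (G i) _)
  by_cases hF : F ≤ G i
  · exact (DFunLike.congr_fun (hcomp (G i) (G i) F hF le_rfl)
      (φ E₁ (G i) (α E₁) * φ E₂ (G i) (β E₂))).symm
  · rw [hzero (G i) F hF]; simp
end

section
/- Let H ⊗_k k[t_1,…,t_k] be as above and let I be the ideal generated by the single element e = Π_{j=1}^k(t_j + α_j) with α_j ∈ H of positive degree (nilpotent). Then the quotient (H ⊗ k[t_1,…,t_k])/I is a free H-module, and the exact sequence 0 → H⊗k[t] →^{·e} H⊗k[t] → (H⊗k[t])/I → 0 holds, i.e. e is a regular element. -/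
/-!
The substitution `t_j ↦ t_j + α_j` is an `H`-algebra automorphism of `H[t_1,…,t_k]`
carrying the monomial `t_1 ⋯ t_k` to `e`. Hence `e` is regular because `t_1 ⋯ t_k` is,
and `H[t]/(e)` is isomorphic to `H[t]/(t_1 ⋯ t_k)`, which is free on the monomials not
divisible by `t_1 ⋯ t_k`.
-/

open MvPolynomial

theorem MulEquiv.isLeftRegular_map {M N : Type*} [Mul M] [Mul N] (f : M ≃* N) {a : M}
    (ha : IsLeftRegular a) : IsLeftRegular (f a) := by
  intro x y hxy
  have h : a * f.symm x = a * f.symm y := by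
    simpa only [map_mul, MulEquiv.symm_apply_apply] using congrArg f.symm hxy
  exact f.symm.injective (ha h)

namespace MvPolynomial

variable {σ R : Type*} [CommRing R]

noncomputable def translateEquiv (α : σ → R) : MvPolynomial σ R ≃ₐ[R] MvPolynomial σ R :=
  AlgEquiv.ofAlgHom (aeval fun j => X j + C (α j)) (aeval fun j => X j - C (α j))
    (by ext; simp) (by ext; simp)

@[simp]
theorem translateEquiv_X (α : σ → R) (j : σ) : translateEquiv α (X j) = X j + C (α j) :=
  aeval_X _ _

theorem translateEquiv_prod_X (α : σ → R) (s : Finset σ) :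
    translateEquiv α (∏ j ∈ s, X j) = ∏ j ∈ s, (X j + C (α j)) := by
  simp only [map_prod, translateEquiv_X]

theorem prod_X_eq_monomial (s : Finset σ) :
    (∏ j ∈ s, X j : MvPolynomial σ R) = monomial (∑ j ∈ s, Finsupp.single j 1) 1 :=
  (monomial_sum_one s _).symm

theorem mem_span_monomial_one_iff {m : σ →₀ ℕ} {p : MvPolynomial σ R} :
    p ∈ Ideal.span {monomial m (1 : R)} ↔ ∀ d, ¬m ≤ d → coeff d p = 0 := by
  rw [← Set.image_singleton (f := fun d => monomial d (1 : R)), mem_ideal_span_monomial_image]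
  simp only [Set.mem_singleton_iff, exists_eq_left, mem_support_iff]
  exact forall_congr' fun d => not_imp_comm

noncomputable def coeffsNotAbove (m : σ →₀ ℕ) :
    MvPolynomial σ R →ₗ[R] ({d : σ →₀ ℕ // ¬m ≤ d} →₀ R) :=
  Finsupp.lsubtypeDomain _ ∘ₗ (basisMonomials σ R).repr.toLinearMap

theorem coeffsNotAbove_surjective (m : σ →₀ ℕ) :
    Function.Surjective (coeffsNotAbove (R := R) m) := fun g =>
  ⟨(basisMonomials σ R).repr.symm g.extendDomain, by
    simp only [coeffsNotAbove, LinearMap.coe_comp, Function.comp_apply,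
      LinearEquiv.coe_coe, LinearEquiv.apply_symm_apply]
    exact Finsupp.subtypeDomain_extendDomain g⟩

theorem ker_coeffsNotAbove (m : σ →₀ ℕ) :
    LinearMap.ker (coeffsNotAbove (R := R) m)
      = (Ideal.span {monomial m (1 : R)}).restrictScalars R := by
  ext p
  rw [Submodule.restrictScalars_mem, mem_span_monomial_one_iff, LinearMap.mem_ker]
  exact Finsupp.subtypeDomain_eq_zero_iff'

instance free_quotient_span_monomial_one (m : σ →₀ ℕ) :
    Module.Free R (MvPolynomial σ R ⧸ Ideal.span {monomial m (1 : R)}) :=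
  Module.Free.of_equiv <|
    ((coeffsNotAbove m).quotKerEquivOfSurjective (coeffsNotAbove_surjective m)).symm ≪≫ₗ
      Submodule.quotEquivOfEq _ _ (ker_coeffsNotAbove m) ≪≫ₗ
      Submodule.Quotient.restrictScalarsEquiv R _

end MvPolynomial

theorem stmt_14_general {H : Type*} [CommRing H] (k : ℕ) (α : Fin k → H) :
    Function.Injective (fun p : MvPolynomial (Fin k) H =>
      (∏ j : Fin k, (X j + C (α j))) * p) ∧
    Function.Surjective (Ideal.Quotient.mk
      (Ideal.span {∏ j : Fin k, (X j + C (α j))} : Ideal (MvPolynomial (Fin k) H))) ∧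
    Module.Free H (MvPolynomial (Fin k) H ⧸
      (Ideal.span {∏ j : Fin k, (X j + C (α j))} : Ideal (MvPolynomial (Fin k) H))) := by
  have he : translateEquiv α (∏ j, X j) = ∏ j, (X j + C (α j)) := translateEquiv_prod_X α _
  refine ⟨?_, Ideal.Quotient.mk_surjective, ?_⟩
  · rw [← he]
    exact (translateEquiv α).toMulEquiv.isLeftRegular_map (isRegular_prod_X _).left
  · rw [prod_X_eq_monomial] at he
    have hspan : Ideal.span {∏ j, (X j + C (α j))} =
        (Ideal.span {monomial (∑ j, Finsupp.single j 1) (1 : H)}).map (translateEquiv α) := by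
      rw [Ideal.map_span, Set.image_singleton, ← he]
    exact Module.Free.of_equiv (Ideal.quotientEquivAlg _ _ (translateEquiv α) hspan).toLinearEquiv

/-- With `e = Π_j (t_j + α_j)`, `α_j ∈ H` nilpotent, the element `e` is regular
(multiplication by `e` is injective, giving the short exact sequence
`0 → H[t] → H[t] → H[t]/(e) → 0`), and the quotient `H[t]/(e)` is a free `H`-module. -/
theorem stmt_14 {H : Type*} [CommRing H] (k : ℕ) (α : Fin k → H)
    (hα : ∀ j, IsNilpotent (α j)) :
    Function.Injective (fun p : MvPolynomial (Fin k) H =>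
      (∏ j : Fin k, (X j + C (α j))) * p) ∧
    Function.Surjective (Ideal.Quotient.mk
      (Ideal.span {∏ j : Fin k, (X j + C (α j))} : Ideal (MvPolynomial (Fin k) H))) ∧
    Module.Free H (MvPolynomial (Fin k) H ⧸
      (Ideal.span {∏ j : Fin k, (X j + C (α j))} : Ideal (MvPolynomial (Fin k) H))) :=
  stmt_14_general k α
end

section
/- Let 0 → A → B ⊕ C →^{f−g} D → 0 be an exact sequence of k-modules (arising from a Mayer–Vietoris sequence where f−g is surjective), and suppose injective maps i_B : B → B', i_C : C → C', i_D : D → D' fit into a commutative square with maps f' − g' : B' ⊕ C' → D'. Then the composite A → B ⊕ C → B' ⊕ C' is injective, and its image equals ker(f'−g') ∩ Im(i_B ⊕ i_C). -/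
/-- Given an exact sequence `0 → A → B ⊕ C → D → 0` (with `f − g` surjective, as in a
Mayer–Vietoris sequence) and injective vertical maps `i_B, i_C, i_D` commuting with
`f' − g' : B' ⊕ C' → D'`, the composite `A → B ⊕ C → B' ⊕ C'` is injective with image
`ker(f'−g') ∩ Im(i_B ⊕ i_C)`. -/
theorem stmt_15 {k : Type*} [CommRing k]
    {A B C D B' C' D' : Type*}
    [AddCommGroup A] [AddCommGroup B] [AddCommGroup C] [AddCommGroup D]
    [AddCommGroup B'] [AddCommGroup C'] [AddCommGroup D']
    [Module k A] [Module k B] [Module k C] [Module k D]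
    [Module k B'] [Module k C'] [Module k D']
    (j : A →ₗ[k] B × C) (f : B →ₗ[k] D) (g : C →ₗ[k] D)
    (f' : B' →ₗ[k] D') (g' : C' →ₗ[k] D')
    (iB : B →ₗ[k] B') (iC : C →ₗ[k] C') (iD : D →ₗ[k] D')
    (hj : Function.Injective j)
    (hexact : LinearMap.range j =
      LinearMap.ker (f.comp (LinearMap.fst k B C) - g.comp (LinearMap.snd k B C)))
    (hsurj : Function.Surjective
      (f.comp (LinearMap.fst k B C) - g.comp (LinearMap.snd k B C)))
    (hiB : Function.Injective iB) (hiC : Function.Injective iC)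
    (hiD : Function.Injective iD)
    (hcomm : iD.comp (f.comp (LinearMap.fst k B C) - g.comp (LinearMap.snd k B C)) =
      (f'.comp (LinearMap.fst k B' C') - g'.comp (LinearMap.snd k B' C')).comp
        (iB.prodMap iC)) :
    Function.Injective ((iB.prodMap iC).comp j) ∧
    LinearMap.range ((iB.prodMap iC).comp j) =
      LinearMap.ker (f'.comp (LinearMap.fst k B' C') - g'.comp (LinearMap.snd k B' C')) ⊓
        LinearMap.range (iB.prodMap iC) := by
  have hProd : Function.Injective (iB.prodMap iC) := by
    intro x y h
    have h1 := congrArg Prod.fst h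
    have h2 := congrArg Prod.snd h
    exact Prod.ext (hiB h1) (hiC h2)
  refine ⟨hProd.comp hj, ?_⟩
  apply le_antisymm
  · rintro _ ⟨a, rfl⟩
    refine ⟨?_, ⟨j a, rfl⟩⟩
    have hja : j a ∈ LinearMap.ker (f.comp (LinearMap.fst k B C) - g.comp (LinearMap.snd k B C)) := by
      rw [← hexact]; exact ⟨a, rfl⟩
    have := congrArg (fun φ => φ (j a)) hcomm
    simp only [LinearMap.comp_apply] at this
    simp only [SetLike.mem_coe, LinearMap.mem_ker, LinearMap.comp_apply] at hja ⊢
    rw [hja, map_zero] at this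
    exact this.symm
  · rintro x' ⟨hker, x, rfl⟩
    have := congrArg (fun φ => φ x) hcomm
    simp only [LinearMap.comp_apply] at this
    simp only [SetLike.mem_coe, LinearMap.mem_ker] at hker
    rw [hker] at this
    have hx : x ∈ LinearMap.ker (f.comp (LinearMap.fst k B C) - g.comp (LinearMap.snd k B C)) := by
      rw [LinearMap.mem_ker]
      apply hiD
      rw [this, map_zero]
    rw [← hexact] at hx
    obtain ⟨a, rfl⟩ := hx
    exact ⟨a, rfl⟩
end
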